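/- arXiv:1008.4789 — 3 statements merged into one kernel-verified Lean document; each statement's English description precedes it below -/
import Mathlib

section
/- Let {ω_i} for i = 0,…,r-1 be functions on [0,1], J a skew-symmetric 2m×2m matrix, and H : ℝ^{2m} → ℝ continuously differentiable. Suppose ω : [0,1] → ℝ^{2m} is a differentiable curve with ω(0) = y₀ whose derivative is ω'(t) = Σ_{i=0}^{r-1} γ_i ω_i(t), where the vectors γ_i satisfy γ_i = η_i ∫₀¹ ω_i(t) J ∇H(ω(t)) dt with scalars η_i > 0. Then H(ω(1)) = H(y₀). -/
/-! Along the curve, `d/dt H(ω t) = Σᵢ ωᵢ(t) ⟪γᵢ, ∇H(ω t)⟫`, so integrating over `[0, 1]` gives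
`H(ω 1) - H(y₀) = Σᵢ ⟪γᵢ, vᵢ⟫` with `vᵢ = ∫₀¹ ωᵢ(t) ∇H(ω t) dt`. The hypothesis on `γᵢ` says
`γᵢ = ηᵢ J vᵢ`, and `⟪J v, v⟫ = 0` for skew-symmetric `J`, so every term vanishes. -/

open MeasureTheory RealInnerProductSpace
open scoped Gradient

theorem Matrix.inner_toEuclideanLin_self_eq_zero {n : Type*} [Fintype n] [DecidableEq n]
    {J : Matrix n n ℝ} (hJ : J.transpose = -J) (v : EuclideanSpace ℝ n) :
    ⟪v, J.toEuclideanLin v⟫ = 0 := by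
  have hadj : J.toEuclideanLin.adjoint = -J.toEuclideanLin := by
    rw [← Matrix.toEuclideanLin_conjTranspose_eq_adjoint,
      Matrix.conjTranspose_eq_transpose_of_trivial, hJ, map_neg]
  have h : ⟪J.toEuclideanLin.adjoint v, v⟫ = ⟪v, J.toEuclideanLin v⟫ :=
    LinearMap.adjoint_inner_left _ _ _
  rw [hadj, LinearMap.neg_apply, inner_neg_left, real_inner_comm] at h
  linarith

section Gradient

variable {E : Type*} [NormedAddCommGroup E] [InnerProductSpace ℝ E] [CompleteSpace E]
  {H : E → ℝ}

theorem ContDiff.continuous_gradient {n : WithTop ℕ∞} (hH : ContDiff ℝ n H) (hn : n ≠ 0) :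
    Continuous (∇ H) := by
  have h := (InnerProductSpace.toDual ℝ E).symm.continuous.comp (hH.continuous_fderiv hn)
  rwa [← toDual_comp_gradient, ← Function.comp_assoc, LinearIsometryEquiv.symm_comp_self,
    Function.id_comp] at h

theorem HasGradientAt.comp_hasDerivAt {ω : ℝ → E} {g v : E} {t : ℝ}
    (hH : HasGradientAt H g (ω t)) (hω : HasDerivAt ω v t) :
    HasDerivAt (fun s => H (ω s)) ⟪g, v⟫ t :=
  hH.hasFDerivAt.comp_hasDerivAt t hω

theorem intervalIntegrable_smul_gradient_comp (hH : ContDiff ℝ 1 H) {ω : ℝ → E}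
    (hω : Continuous ω) {f : ℝ → ℝ} {a b : ℝ} (hf : IntervalIntegrable f volume a b) :
    IntervalIntegrable (fun t => f t • ∇ H (ω t)) volume a b :=
  hf.smul_continuousOn ((hH.continuous_gradient one_ne_zero).comp hω).continuousOn

theorem sub_eq_sum_inner_integral_smul_gradient {ι : Type*} [Fintype ι] (hH : ContDiff ℝ 1 H)
    {f : ι → ℝ → ℝ} {γ : ι → E} {ω : ℝ → E} {a b : ℝ}
    (hf : ∀ i, IntervalIntegrable (f i) volume a b)
    (hω : ∀ t, HasDerivAt ω (∑ i, f i t • γ i) t) :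
    H (ω b) - H (ω a) = ∑ i, ⟪γ i, ∫ t in a..b, f i t • ∇ H (ω t)⟫ := by
  have hωc : Continuous ω := Differentiable.continuous fun t => (hω t).differentiableAt
  have hfg i := intervalIntegrable_smul_gradient_comp hH hωc (hf i)
  have hderiv t : HasDerivAt (fun s => H (ω s)) (∑ i, ⟪γ i, f i t • ∇ H (ω t)⟫) t := by
    have := ((hH.differentiable one_ne_zero).differentiableAt.hasGradientAt).comp_hasDerivAt (hω t)
    simpa only [inner_sum, inner_smul_right, real_inner_comm] using this
  have hint i : IntervalIntegrable (fun t => ⟪γ i, f i t • ∇ H (ω t)⟫) volume a b :=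
    ⟨(hfg i).1.const_inner (γ i), (hfg i).2.const_inner (γ i)⟩
  have hint_sum : IntervalIntegrable (fun t => ∑ i, ⟪γ i, f i t • ∇ H (ω t)⟫) volume a b := by
    simpa only [Finset.sum_fn] using IntervalIntegrable.sum Finset.univ fun i _ => hint i
  calc H (ω b) - H (ω a)
      = ∫ t in a..b, ∑ i, ⟪γ i, f i t • ∇ H (ω t)⟫ :=
        (intervalIntegral.integral_eq_sub_of_hasDerivAt (fun t _ => hderiv t) hint_sum).symm
    _ = ∑ i, ∫ t in a..b, ⟪γ i, f i t • ∇ H (ω t)⟫ :=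
        intervalIntegral.integral_finsetSum fun i _ => hint i
    _ = ∑ i, ⟪γ i, ∫ t in a..b, f i t • ∇ H (ω t)⟫ :=
        Finset.sum_congr rfl fun i _ => (innerSL ℝ (γ i)).intervalIntegral_comp_comm (hfg i)

end Gradient

open MeasureTheory in
theorem stmt_7_general (m r : ℕ)
    (J : Matrix (Fin (2 * m)) (Fin (2 * m)) ℝ) (hJ : J.transpose = -J)
    (H : EuclideanSpace ℝ (Fin (2 * m)) → ℝ) (hH : ContDiff ℝ 1 H)
    (ωi : Fin r → ℝ → ℝ)
    (hint : ∀ i, IntervalIntegrable (ωi i) volume 0 1)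
    (γ : Fin r → EuclideanSpace ℝ (Fin (2 * m)))
    (η : Fin r → ℝ)
    (y₀ : EuclideanSpace ℝ (Fin (2 * m)))
    (ω : ℝ → EuclideanSpace ℝ (Fin (2 * m)))
    (hω0 : ω 0 = y₀)
    (hω' : ∀ t : ℝ, HasDerivAt ω (∑ i, ωi i t • γ i) t)
    (hγ : ∀ i, γ i =
      η i • ∫ t in (0:ℝ)..1, ωi i t • (Matrix.toEuclideanLin J (gradient H (ω t)))) :
    H (ω 1) = H y₀ := by
  have hωc : Continuous ω := Differentiable.continuous fun t => (hω' t).differentiableAt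
  have hγJ i : γ i = η i • J.toEuclideanLin (∫ t in (0:ℝ)..1, ωi i t • ∇ H (ω t)) := by
    rw [hγ i, ← Matrix.coe_toEuclideanCLM_eq_toEuclideanLin, ContinuousLinearMap.coe_coe,
      ← ContinuousLinearMap.intervalIntegral_comp_comm _
        (intervalIntegrable_smul_gradient_comp hH hωc (hint i))]
    simp only [map_smul]
  rw [← hω0, ← sub_eq_zero, sub_eq_sum_inner_integral_smul_gradient hH hint hω']
  refine Finset.sum_eq_zero fun i _ => ?_
  rw [hγJ i, real_inner_smul_left, real_inner_comm, Matrix.inner_toEuclideanLin_self_eq_zero hJ,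
    mul_zero]

open MeasureTheory in
theorem stmt_7 (m r : ℕ)
    (J : Matrix (Fin (2 * m)) (Fin (2 * m)) ℝ) (hJ : J.transpose = -J)
    (H : EuclideanSpace ℝ (Fin (2 * m)) → ℝ) (hH : ContDiff ℝ 1 H)
    (ωi : Fin r → ℝ → ℝ)
    (hint : ∀ i, IntervalIntegrable (ωi i) volume 0 1)
    (γ : Fin r → EuclideanSpace ℝ (Fin (2 * m)))
    (η : Fin r → ℝ) (hη : ∀ i, 0 < η i)
    (y₀ : EuclideanSpace ℝ (Fin (2 * m)))
    (ω : ℝ → EuclideanSpace ℝ (Fin (2 * m)))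
    (hω0 : ω 0 = y₀)
    (hω' : ∀ t : ℝ, HasDerivAt ω (∑ i, ωi i t • γ i) t)
    (hγ : ∀ i, γ i =
      η i • ∫ t in (0:ℝ)..1, ωi i t • (Matrix.toEuclideanLin J (gradient H (ω t)))) :
    H (ω 1) = H y₀ :=
  stmt_7_general m r J hJ H hH ωi hint γ η y₀ ω hω0 hω' hγ
end

section
/- If g : ℝ → ℝ is analytic (or sufficiently smooth) and P_j is the j-th shifted Legendre polynomial, then ∫₀¹ P_j(τ) g(τh) dτ = O(hʲ) as h → 0; that is, there exist C > 0 and δ > 0 with |∫₀¹ P_j(τ) g(τh) dτ| ≤ C |h|ʲ for |h| ≤ δ. -/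
open Polynomial

/-- Shifted Legendre polynomials via the Rodrigues formula. -/
noncomputable def shiftedLegendre (i : ℕ) : Polynomial ℝ :=
  ((Nat.factorial i : ℝ)⁻¹) • derivative^[i] ((X ^ 2 - X) ^ i)

/-!
Integrating the Rodrigues formula by parts `j` times, with boundary terms vanishing because `0`
and `1` are `j`-fold roots of `(τ² - τ)ʲ`, shows that `P_j` is orthogonal on `[0, 1]` to every
polynomial of degree `< j`. The Taylor polynomial of `g` of degree `< j` at `0`, evaluated at
`τ h`, is such a polynomial in `τ`, so only the Taylor remainder `O(|τ h|ʲ) ⊆ O(|h|ʲ)` contributes.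
-/

open Set MeasureTheory

namespace Polynomial

theorem integral_eval_mul_iterate_derivative {a b : ℝ} {f : ℝ[X]} {m : ℕ}
    (hf : ∀ i < m, (derivative^[i] f).eval a = 0 ∧ (derivative^[i] f).eval b = 0) (q : ℝ[X]) :
    ∫ x in a..b, q.eval x * (derivative^[m] f).eval x =
      (-1) ^ m * ∫ x in a..b, (derivative^[m] q).eval x * f.eval x := by
  induction m generalizing q with
  | zero => simp
  | succ m ih =>
    obtain ⟨ha, hb⟩ := hf m m.lt_succ_self
    rw [Function.iterate_succ_apply', intervalIntegral.integral_mul_deriv_eq_deriv_mul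
        (fun x _ => q.hasDerivAt x) (fun x _ => (derivative^[m] f).hasDerivAt x)
        (q.derivative.continuous.intervalIntegrable _ _)
        ((derivative^[m] f).derivative.continuous.intervalIntegrable _ _),
      ha, hb, ih (fun i hi => hf i (hi.trans m.lt_succ_self)), ← Function.iterate_succ_apply]
    ring

theorem eval_iterate_derivative_X_sq_sub_X_pow {i j : ℕ} (hij : i < j) {a : ℝ}
    (ha : a = 0 ∨ a = 1) : (derivative^[i] ((X ^ 2 - X) ^ j)).eval a = 0 := by
  have hdvd : X - C a ∣ X ^ 2 - X := by
    rcases ha with rfl | rfl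
    · exact ⟨X - 1, by simp; ring⟩
    · exact ⟨X, by simp; ring⟩
  exact dvd_iff_isRoot.mp <| (dvd_pow_self _ (Nat.sub_ne_zero_of_lt hij)).trans <|
    pow_sub_dvd_iterate_derivative_of_pow_dvd i (pow_dvd_pow_of_dvd hdvd j)

end Polynomial

theorem integral_shiftedLegendre_mul_eq_zero {j : ℕ} {q : ℝ[X]} (hq : q.degree < j) :
    ∫ τ in (0 : ℝ)..1, (_root_.shiftedLegendre j).eval τ * q.eval τ = 0 := by
  have hparts := integral_eval_mul_iterate_derivative (a := 0) (b := 1) (m := j)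
    (fun i hi => ⟨eval_iterate_derivative_X_sq_sub_X_pow hi (.inl rfl),
      eval_iterate_derivative_X_sq_sub_X_pow hi (.inr rfl)⟩) q
  rw [iterate_derivative_eq_zero_of_degree_lt hq] at hparts
  calc ∫ τ in (0 : ℝ)..1, (_root_.shiftedLegendre j).eval τ * q.eval τ
      = (j.factorial : ℝ)⁻¹ *
          ∫ τ in (0 : ℝ)..1, q.eval τ * (derivative^[j] ((X ^ 2 - X) ^ j)).eval τ := by
        rw [← intervalIntegral.integral_const_mul]
        simp only [_root_.shiftedLegendre, eval_smul, smul_eq_mul]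
        congr 1 with τ
        ring
    _ = 0 := by simp [hparts]

theorem FormalMultilinearSeries.exists_degree_lt_eval_eq_partialSum_mul
    {𝕜 : Type*} [NontriviallyNormedField 𝕜] (p : FormalMultilinearSeries 𝕜 𝕜 𝕜) (n : ℕ) (h : 𝕜) :
    ∃ q : 𝕜[X], q.degree < n ∧ ∀ τ, q.eval τ = p.partialSum n (τ * h) := by
  refine ⟨∑ k : Fin n, C (p.coeff k * h ^ (k : ℕ)) * X ^ (k : ℕ), degree_sum_fin_lt _, fun τ => ?_⟩
  simp only [eval_finsetSum, eval_mul, eval_C, eval_pow, eval_X, partialSum,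
    apply_eq_pow_smul_coeff, smul_eq_mul, mul_pow]
  rw [Fin.sum_univ_eq_sum_range (fun k => p.coeff k * h ^ k * τ ^ k)]
  exact Finset.sum_congr rfl fun k _ => by ring

theorem HasFPowerSeriesAt.exists_norm_sub_partialSum_le
    {𝕜 E F : Type*} [NontriviallyNormedField 𝕜] [NormedAddCommGroup E] [NormedSpace 𝕜 E]
    [NormedAddCommGroup F] [NormedSpace 𝕜 F] {f : E → F} {p : FormalMultilinearSeries 𝕜 E F} {x : E}
    (hf : HasFPowerSeriesAt f p x) (n : ℕ) :
    ∃ C > 0, ∃ δ > 0, ∀ y, ‖y‖ ≤ δ → ‖f (x + y) - p.partialSum n y‖ ≤ C * ‖y‖ ^ n := by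
  obtain ⟨C, hC, hO⟩ := (hf.isBigO_sub_partialSum_pow n).exists_pos
  obtain ⟨ε, hε, hball⟩ := Metric.eventually_nhds_iff.mp hO.bound
  refine ⟨C, hC, ε / 2, by positivity, fun y hy => ?_⟩
  simpa using hball (by simpa using hy.trans_lt (half_lt_self hε))

theorem abs_integral_shiftedLegendre_mul_le {j : ℕ} {f : ℝ → ℝ}
    (hf : IntervalIntegrable f volume 0 1) {q : ℝ[X]} (hq : q.degree < j) {M ε : ℝ}
    (hM : ∀ τ ∈ Icc (0 : ℝ) 1, |(_root_.shiftedLegendre j).eval τ| ≤ M)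
    (hfq : ∀ τ ∈ Icc (0 : ℝ) 1, |f τ - q.eval τ| ≤ ε) :
    |∫ τ in (0 : ℝ)..1, (_root_.shiftedLegendre j).eval τ * f τ| ≤ M * ε := by
  have hbound : ∀ τ ∈ uIoc (0 : ℝ) 1,
      ‖(_root_.shiftedLegendre j).eval τ * (f τ - q.eval τ)‖ ≤ M * ε := by
    rw [uIoc_of_le zero_le_one]
    intro τ hτ
    have hτ' := Ioc_subset_Icc_self hτ
    rw [Real.norm_eq_abs, abs_mul]
    exact mul_le_mul (hM τ hτ') (hfq τ hτ') (abs_nonneg _) ((abs_nonneg _).trans (hM τ hτ'))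
  calc |∫ τ in (0 : ℝ)..1, (_root_.shiftedLegendre j).eval τ * f τ|
      = ‖∫ τ in (0 : ℝ)..1, (_root_.shiftedLegendre j).eval τ * (f τ - q.eval τ)‖ := by
        simp_rw [mul_sub]
        have hPq : Continuous fun τ => (_root_.shiftedLegendre j).eval τ * q.eval τ := by fun_prop
        rw [intervalIntegral.integral_sub
          (hf.continuousOn_mul (_root_.shiftedLegendre j).continuous.continuousOn)
          (hPq.intervalIntegrable _ _),
          integral_shiftedLegendre_mul_eq_zero hq, sub_zero, Real.norm_eq_abs]
    _ ≤ M * ε := by simpa using intervalIntegral.norm_integral_le_of_norm_le_const hbound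

theorem stmt_12 (j : ℕ) (g : ℝ → ℝ) (hg : ∀ x : ℝ, AnalyticAt ℝ g x) :
    ∃ C > (0 : ℝ), ∃ δ > (0 : ℝ), ∀ h : ℝ, |h| ≤ δ →
      |∫ τ in (0:ℝ)..1, (_root_.shiftedLegendre j).eval τ * g (τ * h)| ≤ C * |h| ^ j := by
  obtain ⟨p, hp⟩ := hg 0
  obtain ⟨C, hC, δ, hδ, hrem⟩ := hp.exists_norm_sub_partialSum_le j
  obtain ⟨M, hM⟩ := (isCompact_Icc (a := (0 : ℝ)) (b := 1)).exists_bound_of_continuousOn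
    (_root_.shiftedLegendre j).continuous.continuousOn
  have hg_cont : Continuous g := continuous_iff_continuousAt.2 fun x => (hg x).continuousAt
  refine ⟨max M 1 * C, by positivity, δ, hδ, fun h hh => ?_⟩
  obtain ⟨q, hq, hqS⟩ := p.exists_degree_lt_eval_eq_partialSum_mul j h
  rw [mul_assoc]
  refine abs_integral_shiftedLegendre_mul_le
    ((hg_cont.comp (continuous_mul_const h)).intervalIntegrable _ _) hq
    (fun τ hτ => (hM τ hτ).trans (le_max_left _ _)) fun τ hτ => ?_
  have hτh : |τ * h| ≤ |h| := by
    rw [abs_mul]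
    exact mul_le_of_le_one_left (abs_nonneg h) (abs_le.2 ⟨by linarith [hτ.1], hτ.2⟩)
  calc |g (τ * h) - q.eval τ| = ‖g (0 + τ * h) - p.partialSum j (τ * h)‖ := by
        rw [hqS, zero_add, Real.norm_eq_abs]
    _ ≤ C * |τ * h| ^ j := hrem _ (hτh.trans hh)
    _ ≤ C * |h| ^ j := by gcongr
end

section
/- For the harmonic oscillator y' = Jy with J = [[0,1],[-1,0]], the degree-3 polynomial curve ω defined by ω(t) = y₀ + [(60P_1(t) + 59P_0(t) - P_3(t))I + 10(P_2(t) - P_0(t))J] S y₀ with S = (1/(4·54² + 59²))(-59 I + 2·54 J) has residual R(t) = ω'(t) - Jω(t) = P_3(t) J S y₀; in particular, the residual vanishes exactly at the roots of the shifted Legendre polynomial P_3. -/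
/-!
Since `J * J = -1`, matrices `a • 1 + b • J` multiply like complex numbers `a + b i`; as
`59 ^ 2 + 108 ^ 2 = 4 * 54 ^ 2 + 59 ^ 2`, this makes `S` the inverse of `-59 • 1 - 108 • J`.
Hence `y₀ = (-59 • 1 - 108 • J) *ᵥ v` with `v = S *ᵥ y₀`, and `ω t = (c t • 1 + d t • J) *ᵥ v`
for the polynomials `c = 60 P₁ - P₃` and `d = 10 P₂ - 118`. For any such curve
`ω' - J ω = (c' + d) • v + (d' - c) • J v`, and the explicit shifted Legendre polynomials give
`c' = -d` and `d' = c + P₃`.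
-/

open Polynomial Matrix

theorem shiftedLegendre_zero : _root_.shiftedLegendre 0 = 1 := by
  simp [_root_.shiftedLegendre]

theorem shiftedLegendre_one : _root_.shiftedLegendre 1 = 2 * X - 1 := by
  simp [_root_.shiftedLegendre]
  norm_num

theorem shiftedLegendre_two : _root_.shiftedLegendre 2 = 6 * X ^ 2 - 6 * X + 1 := by
  refine Polynomial.funext fun x => ?_
  simp [_root_.shiftedLegendre, derivative_pow, derivative_mul]
  ring

theorem shiftedLegendre_three :
    _root_.shiftedLegendre 3 = 20 * X ^ 3 - 30 * X ^ 2 + 12 * X - 1 := by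
  refine Polynomial.funext fun x => ?_
  simp [_root_.shiftedLegendre, derivative_pow, derivative_mul, Nat.factorial]
  ring

theorem smul_one_sub_smul_mul_smul_one_add_smul {R A : Type*} [CommRing R] [Ring A]
    [Algebra R A] {J : A} (hJ : J * J = -1) (a b : R) :
    (a • 1 - b • J) * (a • 1 + b • J) = (a ^ 2 + b ^ 2) • (1 : A) := by
  simp only [sub_mul, mul_add, smul_mul_smul, one_mul, mul_one, hJ, mul_comm a b]
  module

theorem hasDerivAt_smul_one_add_smul_mulVec {𝕜 n : Type*} [NontriviallyNormedField 𝕜]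
    [Fintype n] [DecidableEq n] {J : Matrix n n 𝕜} (hJ : J * J = -1) (v : n → 𝕜)
    {c d r : 𝕜[X]} (hc : derivative c = -d) (hd : derivative d = c + r) (t : 𝕜) :
    HasDerivAt (fun t => (c.eval t • 1 + d.eval t • J) *ᵥ v)
      (J *ᵥ ((c.eval t • 1 + d.eval t • J) *ᵥ v) + r.eval t • J *ᵥ v) t := by
  have hcurve : (fun t => (c.eval t • 1 + d.eval t • J) *ᵥ v) =
      fun t => c.eval t • v + d.eval t • J *ᵥ v := by
    funext t
    rw [add_mulVec, smul_mulVec, smul_mulVec, one_mulVec]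
  have hJω : J *ᵥ ((c.eval t • 1 + d.eval t • J) *ᵥ v) = c.eval t • J *ᵥ v - d.eval t • v := by
    rw [mulVec_mulVec, mul_add, mul_smul_comm, mul_smul_comm, mul_one, hJ, add_mulVec,
      smul_mulVec, smul_mulVec, neg_mulVec, one_mulVec]
    module
  rw [hcurve, hJω]
  refine ((c.hasDerivAt t).smul_const v).add ((d.hasDerivAt t).smul_const (J *ᵥ v))
    |>.congr_deriv ?_
  rw [hc, hd, eval_neg, eval_add]
  module

theorem stmt_14 (y₀ : Fin 2 → ℝ) (J S : Matrix (Fin 2) (Fin 2) ℝ)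
    (hJ : J = !![0, 1; -1, 0])
    (hS : S = (1 / (4 * 54 ^ 2 + 59 ^ 2) : ℝ) •
      ((-59 : ℝ) • (1 : Matrix (Fin 2) (Fin 2) ℝ) + (108 : ℝ) • J))
    (ω : ℝ → Fin 2 → ℝ)
    (hω : ∀ t : ℝ, ω t = y₀ +
      Matrix.mulVec
        ((60 * (_root_.shiftedLegendre 1).eval t + 59 * (_root_.shiftedLegendre 0).eval t
            - (_root_.shiftedLegendre 3).eval t) • (1 : Matrix (Fin 2) (Fin 2) ℝ)
          + (10 * ((_root_.shiftedLegendre 2).eval t - (_root_.shiftedLegendre 0).eval t)) • J)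
        (S.mulVec y₀)) :
    (∀ t : ℝ, HasDerivAt ω
        (J.mulVec (ω t) + (_root_.shiftedLegendre 3).eval t • J.mulVec (S.mulVec y₀)) t) ∧
    (∀ t : ℝ, (_root_.shiftedLegendre 3).eval t = 0 → HasDerivAt ω (J.mulVec (ω t)) t) := by
  have hJJ : J * J = -1 := by
    rw [hJ]; ext i j; fin_cases i <;> fin_cases j <;> simp
  set v := S *ᵥ y₀
  have hy₀ : y₀ = ((-59 : ℝ) • 1 - (108 : ℝ) • J) *ᵥ v := by
    rw [mulVec_mulVec, hS, mul_smul_comm, smul_one_sub_smul_mul_smul_one_add_smul hJJ, smul_smul]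
    norm_num
  set c : ℝ[X] := -59 + (60 * _root_.shiftedLegendre 1 + 59 * _root_.shiftedLegendre 0
    - _root_.shiftedLegendre 3)
  set d : ℝ[X] := -108 + 10 * (_root_.shiftedLegendre 2 - _root_.shiftedLegendre 0)
  obtain ⟨hc, hd⟩ : derivative c = -d ∧ derivative d = c + _root_.shiftedLegendre 3 := by
    simp only [c, d, shiftedLegendre_zero, shiftedLegendre_one, shiftedLegendre_two,
      shiftedLegendre_three, derivative_add, derivative_sub, derivative_mul, derivative_neg,
      derivative_ofNat, derivative_X_pow, derivative_X, derivative_one, Nat.cast_ofNat, map_ofNat]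
    constructor <;> ring
  have hωcd : ω = fun t => (c.eval t • 1 + d.eval t • J) *ᵥ v := by
    funext t
    rw [hω, hy₀, ← add_mulVec]
    congr 1
    simp only [c, d, eval_add, eval_sub, eval_mul, eval_neg, eval_ofNat]
    module
  have key := hasDerivAt_smul_one_add_smul_mulVec hJJ v hc hd
  rw [hωcd]
  exact ⟨key, fun t ht => by simpa only [ht, zero_smul, add_zero] using key t⟩
end
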